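/- arXiv:2110.07839 — 4 statements merged into one kernel-verified Lean document; each statement's English description precedes it below -/
import Mathlib

section
/- Every group homomorphism from the homeomorphism group of the Cantor space to a countable group is trivial (has trivial image). -/
/-!
The kernel `N` of `φ` has countable index, so it meets the uncountable group of coordinate flips
`x ↦ u xor x` nontrivially. A nontrivial element of `N` moves some cylinder off itself, and all
cylinders of positive length are equivalent under homeomorphisms, so `N` contains an `h` moving
`V = {x | x 0 = true}` off itself. For `a`, `b` supported in `V`, `b` commutes with `h a h⁻¹`,
whence `φ ⁅a, b⁆ = 1`. A swindle, transported into `V`, makes every homeomorphism supported in a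
small cylinder such a commutator: if `σ` shifts a `ℤ`-indexed ladder of cylinders and `g` is
supported in the rung at `0`, then `g = ⁅k, σ⁆` for the infinite product `k = ∏_{n ≥ 0} σⁿ g σ⁻ⁿ`.
Conjugating, `N` contains every homeomorphism supported in a cylinder or in the complement of one,
and every homeomorphism is a product of two of the latter.
-/

instance homeoGroup {X : Type*} [TopologicalSpace X] : Group (X ≃ₜ X) where
  mul f g := g.trans f
  one := Homeomorph.refl X
  inv := Homeomorph.symm
  mul_assoc _ _ _ := rfl
  one_mul _ := Homeomorph.ext fun _ => rfl
  mul_one _ := Homeomorph.ext fun _ => rfl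
  inv_mul_cancel f := Homeomorph.ext f.symm_apply_apply

open Function Set
open scoped commutatorElement

theorem MonoidHom.map_commutatorElement_eq_one_of_commute {G H : Type*} [Group G] [Group H]
    (φ : G →* H) {a b h : G} (hh : φ h = 1) (hc : Commute b (h * a * h⁻¹)) : φ ⁅a, b⁆ = 1 := by
  have : Commute (φ b) (φ a) := by simpa [hh] using hc.map φ
  rw [map_commutatorElement, commutatorElement_eq_one_iff_commute]
  exact this.symm

theorem continuous_cond {X Y : Type*} [TopologicalSpace X] [TopologicalSpace Y] {p : X → Bool}
    {f g : X → Y} (hp : Continuous p) (hf : Continuous f) (hg : Continuous g) :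
    Continuous fun x => bif p x then f x else g x := by
  have : Continuous fun q : Bool × X => bif q.1 then f q.2 else g q.2 :=
    continuous_prod_of_discrete_left.2 fun b => by cases b <;> assumption
  exact this.comp (hp.prodMk continuous_id)

namespace Homeomorph

variable {X : Type*} [TopologicalSpace X]

def ofInvolutive (f : X → X) (hf : Involutive f) (hc : Continuous f) : X ≃ₜ X where
  toEquiv := hf.toPerm f
  continuous_toFun := hc
  continuous_invFun := hc

theorem image_mul (f g : X ≃ₜ X) (s : Set X) : ⇑(f * g) '' s = f '' (g '' s) :=
  (image_image f g s).symm

theorem image_inv_image (f : X ≃ₜ X) (s : Set X) : ⇑f⁻¹ '' (f '' s) = s :=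
  f.toEquiv.symm_image_image s

def SupportedIn (f : X ≃ₜ X) (s : Set X) : Prop := ∀ x ∉ s, f x = x

namespace SupportedIn

variable {f g : X ≃ₜ X} {s s' : Set X}

theorem mono (hf : SupportedIn f s) (h : s ⊆ s') : SupportedIn f s' :=
  fun x hx => hf x fun hs => hx (h hs)

theorem symm (hf : SupportedIn f s) : SupportedIn f.symm s :=
  fun x hx => f.symm_apply_eq.2 (hf x hx).symm

theorem mapsTo (hf : SupportedIn f s) : MapsTo f s s := fun x hx => by
  by_contra hfx
  rw [f.injective (hf _ hfx)] at hfx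
  exact hfx hx

theorem conj (hf : SupportedIn f s) (t : X ≃ₜ X) : SupportedIn (t * f * t⁻¹) (t '' s) :=
  fun x hx => by
    have : t.symm x ∉ s := fun h => hx ⟨_, h, t.apply_symm_apply x⟩
    change t (f (t.symm x)) = x
    rw [hf _ this, t.apply_symm_apply]

theorem commute (hf : SupportedIn f s) (hg : SupportedIn g s') (hd : Disjoint s s') :
    Commute f g := by
  refine Homeomorph.ext fun x => ?_
  change f (g x) = g (f x)
  by_cases hx : x ∈ s
  · rw [hg x (hd.notMem_of_mem_left hx), hg _ (hd.notMem_of_mem_left (hf.mapsTo hx))]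
  · by_cases hx' : x ∈ s'
    · rw [hf x hx, hf _ (hd.notMem_of_mem_right (hg.mapsTo hx'))]
    · rw [hf x hx, hg x hx', hf x hx]

theorem map_commutatorElement_eq_one {H : Type*} [Group H] {φ : (X ≃ₜ X) →* H} {h : X ≃ₜ X}
    (hf : SupportedIn f s) (hg : SupportedIn g s) (hh : φ h = 1) (hs : Disjoint (h '' s) s) :
    φ ⁅f, g⁆ = 1 :=
  φ.map_commutatorElement_eq_one_of_commute hh (hg.commute (hf.conj h) hs.symm)

end SupportedIn

theorem exists_eq_mul_supportedIn (g : X ≃ₜ X) {W : Set X} (hW : IsClopen W)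
    (hd : Disjoint W (g '' W)) :
    ∃ a b : X ≃ₜ X, g = a * b ∧ SupportedIn a (W ∪ g '' W) ∧ SupportedIn b Wᶜ := by
  classical
  have hgW : ∀ x, g.symm x ∈ W ↔ x ∈ g '' W := fun x => by
    rw [g.image_eq_preimage_symm]
    rfl
  let s : X → X := fun x => if x ∈ W then g x else if g.symm x ∈ W then g.symm x else x
  have hgx : ∀ x ∈ W, g x ∉ W := fun x hx => hd.notMem_of_mem_right ⟨x, hx, rfl⟩
  have hs_mem : ∀ x ∈ W, s x = g x := fun x hx => if_pos hx
  have hs_image : ∀ x ∈ W, s (g x) = x := fun x hx => by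
    simp only [s, if_neg (hgx x hx), g.symm_apply_apply, if_pos hx]
  have hs_out : ∀ x, x ∉ W → x ∉ g '' W → s x = x := fun x hx hx' => by
    simp only [s, if_neg hx, if_neg (mt (hgW x).1 hx')]
  have hs : Involutive s := fun x => by
    by_cases hx : x ∈ W
    · rw [hs_mem x hx, hs_image x hx]
    by_cases hx' : x ∈ g '' W
    · obtain ⟨y, hy, rfl⟩ := hx'
      rw [hs_image y hy, hs_mem y hy]
    · rw [hs_out x hx hx', hs_out x hx hx']
  have hsc : Continuous s := by
    refine Continuous.if (by simp [hW.frontier_eq]) g.continuous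
      (Continuous.if ?_ g.symm.continuous continuous_id)
    intro x hx
    rw [show {x | g.symm x ∈ W} = g.symm ⁻¹' W from rfl,
      (hW.preimage g.symm.continuous).frontier_eq] at hx
    exact hx.elim
  let a := ofInvolutive s hs hsc
  refine ⟨a, a * g, ?_, fun x hx => ?_, fun x hx => ?_⟩
  · rw [← mul_assoc, show a * a = 1 from Homeomorph.ext hs, one_mul]
  · exact hs_out x (fun h => hx (Or.inl h)) fun h => hx (Or.inr h)
  · exact hs_image x (not_not.1 hx)

end Homeomorph

namespace CantorSpace

open Homeomorph PiNat

local notation "𝒞" => ℕ → Bool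

theorem isClopen_cylinder (x : 𝒞) (n : ℕ) : IsClopen (cylinder x n) :=
  ⟨by rw [cylinder_eq_pi]; exact isClosed_set_pi fun i _ => isClosed_discrete _,
    isOpen_cylinder _ x n⟩

theorem not_countable : ¬Countable 𝒞 := by
  rw [← Cardinal.mk_le_aleph0_iff, not_le]
  simpa using Cardinal.cantor Cardinal.aleph0

def cons (b : Bool) (x : 𝒞) : 𝒞
  | 0 => b
  | n + 1 => x n

def tail (x : 𝒞) : 𝒞 := fun n => x (n + 1)

@[simp] theorem cons_zero (b : Bool) (x : 𝒞) : cons b x 0 = b := rfl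

@[simp] theorem cons_succ (b : Bool) (x : 𝒞) (n : ℕ) : cons b x (n + 1) = x n := rfl

@[simp] theorem tail_apply (x : 𝒞) (n : ℕ) : tail x n = x (n + 1) := rfl

@[simp] theorem tail_cons (b : Bool) (x : 𝒞) : tail (cons b x) = x := rfl

theorem cons_head_tail (x : 𝒞) : cons (x 0) (tail x) = x :=
  funext fun n => by cases n <;> rfl

theorem cons_tail_of_apply_zero {x : 𝒞} {b : Bool} (h : x 0 = b) : cons b (tail x) = x :=
  h ▸ cons_head_tail x

theorem exists_eq_cons_cons (x : 𝒞) : ∃ a b y, x = cons a (cons b y) :=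
  ⟨x 0, x 1, tail (tail x), by rw [show x 1 = tail x 0 from rfl, cons_head_tail, cons_head_tail]⟩

theorem continuous_cons (b : Bool) : Continuous (cons b) :=
  continuous_pi fun n => by cases n; exacts [continuous_const, continuous_apply _]

theorem continuous_tail : Continuous tail := continuous_pi fun n => continuous_apply (n + 1)

theorem image_cons_cylinder (b : Bool) (x : 𝒞) (n : ℕ) :
    cons b '' cylinder x n = cylinder (cons b x) (n + 1) := by
  ext y
  simp only [mem_image, mem_cylinder_iff]
  constructor
  · rintro ⟨z, hz, rfl⟩ (_ | i) hi
    exacts [rfl, hz i (by omega)]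
  · intro hy
    exact ⟨tail y, fun i hi => hy (i + 1) (by omega), cons_tail_of_apply_zero (hy 0 n.succ_pos)⟩

def xorHomeo (u : 𝒞) : 𝒞 ≃ₜ 𝒞 :=
  ofInvolutive (fun x i => xor (u i) (x i)) (fun x => funext fun i => by simp)
    (continuous_pi fun i =>
      (continuous_of_discreteTopology (f := fun b => xor (u i) b)).comp (continuous_apply i))

theorem xorHomeo_apply (u x : 𝒞) : xorHomeo u x = fun i => xor (u i) (x i) := rfl

theorem xorHomeo_injective : Injective xorHomeo := fun u v h => by
  simpa [xorHomeo_apply] using congr($h fun _ => false)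

theorem image_xorHomeo_cylinder (u x : 𝒞) (n : ℕ) :
    xorHomeo u '' cylinder x n = cylinder (fun i => xor (u i) (x i)) n := by
  ext y
  simp only [mem_image, mem_cylinder_iff, xorHomeo_apply]
  constructor
  · rintro ⟨z, hz, rfl⟩ i hi
    simp [hz i hi]
  · intro hy
    exact ⟨xorHomeo u y, fun i hi => by simp [xorHomeo_apply, hy i hi],
      funext fun i => by simp [xorHomeo_apply]⟩

theorem exists_ne_one_map_eq_one {H : Type*} [Group H] [Countable H] (φ : (𝒞 ≃ₜ 𝒞) →* H) :
    ∃ g, g ≠ 1 ∧ φ g = 1 := by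
  obtain ⟨u, v, huv, hne⟩ := not_injective_iff.1 fun hinj : Injective (φ ∘ xorHomeo) =>
    not_countable hinj.countable
  refine ⟨xorHomeo u * (xorHomeo v)⁻¹, ?_, ?_⟩
  · rw [Ne, mul_inv_eq_one]
    exact xorHomeo_injective.ne hne
  · rw [map_mul, map_inv, mul_inv_eq_one]
    exact huv

theorem exists_cylinder_disjoint_image {g : 𝒞 ≃ₜ 𝒞} (hg : g ≠ 1) :
    ∃ x n, 1 ≤ n ∧ Disjoint (cylinder x n) (g '' cylinder x n) ∧
      ∃ z, Disjoint (cylinder z n) (cylinder x n ∪ g '' cylinder x n) := by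
  obtain ⟨x, hx⟩ : ∃ x, g x ≠ x := by
    by_contra! h
    exact hg (Homeomorph.ext h)
  obtain ⟨i, hi⟩ := Function.ne_iff.1 hx
  obtain ⟨_, ⟨y, m, rfl⟩, hxm, hm⟩ := (isTopologicalBasis_cylinders _).exists_subset_of_mem_open
    (a := x) (u := {w | g w i = g x i}) rfl
    ((isOpen_discrete {g x i}).preimage ((continuous_apply i).comp g.continuous))
  rw [mem_cylinder_iff_eq] at hxm
  set n := max m (i + 2)
  have hgi : ∀ w ∈ cylinder x n, g w i = g x i := fun w hw =>
    hm (hxm ▸ cylinder_anti x (le_max_left _ _) hw)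
  have hmoved : ∀ w ∈ cylinder x n, g w i ≠ x i := fun w hw => hgi w hw ▸ hi
  refine ⟨x, n, by omega, disjoint_left.2 ?_, update x (i + 1) (!x (i + 1)), disjoint_left.2 ?_⟩
  · rintro _ hw ⟨w, hw', rfl⟩
    exact hmoved w hw' (hw i (by omega))
  · rintro w hw (hw' | ⟨v, hv, rfl⟩)
    · have := (hw (i + 1) (by omega)).symm.trans (hw' (i + 1) (by omega))
      simp at this
    · exact hmoved v hv ((hw i (by omega)).trans (update_of_ne (by omega) _ _))

/- The cylinders `1ⁿ⁺¹0` (`n ≥ 0`) and `0⁻ⁿ1` (`n < 0`) form a ladder indexed by `ℤ`, accumulating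
at the two constant sequences; `ladderShift` moves every rung one step up. -/
def ladderShiftFun (x : 𝒞) : 𝒞 :=
  bif x 0 then cons true x else bif x 1 then cons true (cons false (tail (tail x))) else tail x

def ladderUnshiftFun (x : 𝒞) : 𝒞 :=
  bif x 0 then (bif x 1 then tail x else cons false (cons true (tail (tail x)))) else cons false x

def ladderShift : 𝒞 ≃ₜ 𝒞 :=
  Continuous.homeoOfEquivCompactToT2 (f := {
      toFun := ladderShiftFun
      invFun := ladderUnshiftFun
      left_inv := fun x => by
        obtain ⟨a, b, y, rfl⟩ := exists_eq_cons_cons x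
        cases a <;> cases b <;> rfl
      right_inv := fun x => by
        obtain ⟨a, b, y, rfl⟩ := exists_eq_cons_cons x
        cases a <;> cases b <;> rfl })
    (continuous_cond (continuous_apply 0) (continuous_cons true)
      (continuous_cond (continuous_apply 1)
        ((continuous_cons true).comp
          ((continuous_cons false).comp (continuous_tail.comp continuous_tail)))
        continuous_tail))

theorem ladderShift_apply (x : 𝒞) : ladderShift x = ladderShiftFun x := rfl

theorem ladderShift_symm_apply (x : 𝒞) : ladderShift.symm x = ladderUnshiftFun x := rfl

theorem image_ladderShift_cylinder {n : ℕ} (hn : 1 ≤ n) :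
    ladderShift '' cylinder (fun _ => true) n = cylinder (fun _ => true) (n + 1) := by
  rw [image_congr fun y hy => ?_, image_cons_cylinder]
  · congr
    funext i
    cases i <;> rfl
  · rw [ladderShift_apply, ladderShiftFun, hy 0 hn]
    rfl

def headTrue : Set 𝒞 := cylinder (fun _ => true) 1

theorem mem_headTrue {x : 𝒞} : x ∈ headTrue ↔ x 0 = true := by
  simp [headTrue, mem_cylinder_iff]

theorem compl_headTrue : headTrueᶜ = cylinder (fun _ => false) 1 := by
  ext x
  simp [headTrue, mem_cylinder_iff]

theorem exists_image_headTrue_eq (y : 𝒞) {n : ℕ} (hn : 1 ≤ n) :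
    ∃ t : 𝒞 ≃ₜ 𝒞, t '' headTrue = cylinder y n := by
  have himage : ∀ k, ⇑(ladderShift ^ k) '' headTrue = cylinder (fun _ => true) (k + 1) := by
    intro k
    induction k with
    | zero => exact image_id _
    | succ k ih => rw [pow_succ', Homeomorph.image_mul, ih, image_ladderShift_cylinder (by omega)]
  refine ⟨xorHomeo (fun i => !y i) * ladderShift ^ (n - 1), ?_⟩
  rw [Homeomorph.image_mul, himage, Nat.sub_add_cancel hn, image_xorHomeo_cylinder]
  congr
  funext i
  simp

theorem exists_image_cylinder_eq {y y' : 𝒞} {n n' : ℕ} (hn : 1 ≤ n) (hn' : 1 ≤ n') :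
    ∃ t : 𝒞 ≃ₜ 𝒞, t '' cylinder y n = cylinder y' n' := by
  obtain ⟨t, ht⟩ := exists_image_headTrue_eq y hn
  obtain ⟨t', ht'⟩ := exists_image_headTrue_eq y' hn'
  exact ⟨t' * t⁻¹, by rw [Homeomorph.image_mul, ← ht, image_inv_image, ht']⟩

def rung : Set 𝒞 := {x | x 0 = true ∧ x 1 = false}

theorem head_cases (x : 𝒞) : x 0 = false ∨ x ∈ rung ∨ x 0 = true ∧ x 1 = true := by
  cases h0 : x 0 <;> cases h1 : x 1 <;> simp [rung, h0, h1]

/- For `g` supported in the rung `10`, `ladder g` is the infinite product `∏_{n ≥ 0} σⁿ g σ⁻ⁿ` over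
the rungs `1ⁿ⁺¹0`. Defining it one coordinate at a time, by recursion on the coordinate, makes its
continuity at the accumulation point `111…` an induction. -/
def ladderCoord (g : 𝒞 → 𝒞) : ℕ → 𝒞 → Bool
  | 0, x => bif x 0 then (bif x 1 then true else g x 0) else x 0
  | i + 1, x => bif x 0 then (bif x 1 then ladderCoord g i (tail x) else g x (i + 1)) else x (i + 1)

def ladder (g : 𝒞 → 𝒞) (x : 𝒞) : 𝒞 := fun i => ladderCoord g i x

section Ladder

variable {g g' : 𝒞 → 𝒞} {x : 𝒞}

theorem ladder_of_head_false (h : x 0 = false) : ladder g x = x :=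
  funext fun i => by cases i <;> simp [ladder, ladderCoord, h]

theorem ladder_of_mem_rung (h : x ∈ rung) : ladder g x = g x :=
  funext fun i => by cases i <;> simp [ladder, ladderCoord, h.1, h.2]

theorem ladder_of_head_true_true (h0 : x 0 = true) (h1 : x 1 = true) :
    ladder g x = cons true (ladder g (tail x)) :=
  funext fun i => by cases i <;> simp [ladder, ladderCoord, h0, h1]

theorem ladder_unique {F : 𝒞 → 𝒞} (h₁ : ∀ x, x 0 = false → F x = x) (h₂ : ∀ x ∈ rung, F x = g x)
    (h₃ : ∀ x, x 0 = true → x 1 = true → F x = cons true (F (tail x))) : F = ladder g := by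
  funext x i
  induction i using Nat.strong_induction_on generalizing x with
  | _ i ih =>
    rcases head_cases x with h | h | ⟨h0, h1⟩
    · rw [h₁ x h, ladder_of_head_false h]
    · rw [h₂ x h, ladder_of_mem_rung h]
    · rw [h₃ x h0 h1, ladder_of_head_true_true h0 h1]
      cases i with
      | zero => rfl
      | succ j => exact ih j j.lt_succ_self (tail x)

theorem ladder_apply_zero (hg : MapsTo g rung rung) (h : x 0 = true) : ladder g x 0 = true := by
  rcases head_cases x with h' | h' | ⟨h0, h1⟩
  · simp [h] at h'
  · rw [ladder_of_mem_rung h']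
    exact (hg h').1
  · rw [ladder_of_head_true_true h0 h1]
    rfl

theorem ladder_ladder (hg' : MapsTo g' rung rung) (x : 𝒞) :
    ladder g (ladder g' x) = ladder (g ∘ g') x := by
  refine congrFun (ladder_unique (F := ladder g ∘ ladder g') (fun x h => ?_) (fun x h => ?_)
    (fun x h0 h1 => ?_)) x
  · simp only [comp_apply, ladder_of_head_false h]
  · simp only [comp_apply, ladder_of_mem_rung h, ladder_of_mem_rung (hg' h)]
  · simp only [comp_apply, ladder_of_head_true_true h0 h1]
    exact ladder_of_head_true_true rfl (ladder_apply_zero hg' h1)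

theorem ladder_id : ladder id = id :=
  (ladder_unique (fun _ _ => rfl) (fun _ _ => rfl) fun _ h0 _ =>
    (cons_tail_of_apply_zero h0).symm).symm

theorem continuous_ladder (hg : Continuous g) : Continuous (ladder g) := by
  refine continuous_pi fun i => ?_
  induction i with
  | zero =>
    exact continuous_cond (continuous_apply 0)
      (continuous_cond (continuous_apply 1) continuous_const ((continuous_apply 0).comp hg))
      (continuous_apply 0)
  | succ i ih =>
    exact continuous_cond (continuous_apply 0)
      (continuous_cond (continuous_apply 1) (ih.comp continuous_tail)
        ((continuous_apply (i + 1)).comp hg))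
      (continuous_apply (i + 1))

end Ladder

def ladderHomeo (g : 𝒞 ≃ₜ 𝒞) (hg : SupportedIn g rung) : 𝒞 ≃ₜ 𝒞 :=
  Continuous.homeoOfEquivCompactToT2 (f := {
      toFun := ladder g
      invFun := ladder g.symm
      left_inv := fun x => by rw [ladder_ladder hg.mapsTo, g.symm_comp_self, ladder_id]; rfl
      right_inv := fun x => by
        rw [ladder_ladder hg.symm.mapsTo, g.self_comp_symm, ladder_id]; rfl })
    (continuous_ladder g.continuous)

theorem ladder_eq_of_supportedIn {g : 𝒞 ≃ₜ 𝒞} (hg : SupportedIn g rung) (x : 𝒞) :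
    ladder g x = g (ladderShift (ladder g (ladderShift.symm x))) := by
  have hfix : ∀ y ∉ rung, g y = y := hg
  obtain ⟨a, b, y, rfl⟩ := exists_eq_cons_cons x
  cases a
  · have hu : ladderShift.symm (cons false (cons b y)) = cons false (cons false (cons b y)) := rfl
    rw [hu, ladder_of_head_false (x := cons false (cons b y)) rfl,
      ladder_of_head_false (x := cons false _) rfl]
    exact (hfix _ (by simp [rung])).symm
  cases b
  · have hu : ladderShift.symm (cons true (cons false y)) = cons false (cons true y) := rfl
    rw [hu, ladder_of_mem_rung ⟨rfl, rfl⟩, ladder_of_head_false (x := cons false _) rfl]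
    rfl
  · set z := ladder g (cons true y)
    have hz : z 0 = true := ladder_apply_zero hg.mapsTo rfl
    have hshift : ladderShift z = cons true z := by
      rw [ladderShift_apply, ladderShiftFun, hz]
      rfl
    rw [ladder_of_head_true_true rfl rfl, ladderShift_symm_apply]
    change cons true z = g (ladderShift z)
    rw [hshift, hfix _ (by simp [rung, hz])]

theorem commutatorElement_ladderHomeo_ladderShift {g : 𝒞 ≃ₜ 𝒞} (hg : SupportedIn g rung) :
    ⁅ladderHomeo g hg, ladderShift⁆ = g := by
  have hk : ladderHomeo g hg = g * ladderShift * ladderHomeo g hg * ladderShift⁻¹ :=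
    Homeomorph.ext (ladder_eq_of_supportedIn hg)
  rw [commutatorElement_def]
  nth_rw 1 [hk]
  group

def liftFun (f : 𝒞 → 𝒞) (x : 𝒞) : 𝒞 := bif x 0 then cons true (f (tail x)) else x

theorem liftFun_liftFun (f f' : 𝒞 → 𝒞) (x : 𝒞) : liftFun f (liftFun f' x) = liftFun (f ∘ f') x := by
  cases h : x 0 <;> simp [liftFun, h]

theorem liftFun_id (x : 𝒞) : liftFun id x = x := by
  cases h : x 0
  · simp [liftFun, h]
  · simp only [liftFun, h, cond_true, id]
    exact cons_tail_of_apply_zero h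

def liftHom : (𝒞 ≃ₜ 𝒞) →* (𝒞 ≃ₜ 𝒞) where
  toFun f := Continuous.homeoOfEquivCompactToT2 (f := {
      toFun := liftFun f
      invFun := liftFun f.symm
      left_inv := fun x => by rw [liftFun_liftFun, f.symm_comp_self, liftFun_id]
      right_inv := fun x => by rw [liftFun_liftFun, f.self_comp_symm, liftFun_id] })
    (continuous_cond (continuous_apply 0)
      ((continuous_cons true).comp (f.continuous.comp continuous_tail)) continuous_id)
  map_one' := Homeomorph.ext liftFun_id
  map_mul' f f' := Homeomorph.ext fun x => (liftFun_liftFun f f' x).symm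

theorem liftHom_apply (f : 𝒞 ≃ₜ 𝒞) (x : 𝒞) : liftHom f x = liftFun f x := rfl

theorem supportedIn_liftHom (f : 𝒞 ≃ₜ 𝒞) : SupportedIn (liftHom f) headTrue := fun x hx => by
  rw [mem_headTrue, Bool.not_eq_true] at hx
  simp [liftHom_apply, liftFun, hx]

theorem exists_liftHom_eq {f : 𝒞 ≃ₜ 𝒞} {s : Set 𝒞} (hf : SupportedIn f (cons true '' s)) :
    ∃ f', SupportedIn f' s ∧ liftHom f' = f := by
  have hV : ∀ {f : 𝒞 ≃ₜ 𝒞}, SupportedIn f (cons true '' s) → ∀ x, x 0 = true → f x 0 = true :=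
    fun hf x hx => mem_headTrue.1 <| (hf.mono (s' := headTrue)
      (by rintro _ ⟨y, -, rfl⟩; exact mem_headTrue.2 rfl)).mapsTo (mem_headTrue.2 hx)
  let f' : 𝒞 ≃ₜ 𝒞 := Continuous.homeoOfEquivCompactToT2 (f := {
      toFun := fun x => tail (f (cons true x))
      invFun := fun x => tail (f.symm (cons true x))
      left_inv := fun x => by
        simp only
        rw [cons_tail_of_apply_zero (hV hf _ rfl), f.symm_apply_apply, tail_cons]
      right_inv := fun x => by
        simp only
        rw [cons_tail_of_apply_zero (hV hf.symm _ rfl), f.apply_symm_apply, tail_cons] })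
    (continuous_tail.comp (f.continuous.comp (continuous_cons true)))
  refine ⟨f', fun x hx => ?_, Homeomorph.ext fun x => ?_⟩
  · change tail (f (cons true x)) = x
    have hx' : cons true x ∉ cons true '' s := by
      rintro ⟨y, hy, hyx⟩
      obtain rfl : y = x := congrArg tail hyx
      exact hx hy
    rw [hf _ hx', tail_cons]
  · rw [liftHom_apply, liftFun]
    cases h : x 0
    · exact (hf x (by rintro ⟨y, -, rfl⟩; simp at h)).symm
    · change cons true (tail (f (cons true (tail x)))) = f x
      rw [cons_tail_of_apply_zero h, cons_tail_of_apply_zero (hV hf x h)]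

theorem image_cons_rung :
    cons true '' rung = cylinder (cons true (cons true fun _ => false)) 3 := by
  have : rung = cylinder (cons true fun _ => false) 2 := by
    ext x
    simp only [rung, mem_ofPred_eq, mem_cylinder_iff]
    refine ⟨fun ⟨h0, h1⟩ i hi => ?_, fun h => ⟨h 0 (by omega), h 1 (by omega)⟩⟩
    interval_cases i <;> assumption
  rw [this, image_cons_cylinder]

section Kernel

variable {H : Type*} [Group H] {φ : (𝒞 ≃ₜ 𝒞) →* H} {h : 𝒞 ≃ₜ 𝒞}

theorem map_eq_one_of_supportedIn_image_cons_rung (hh : φ h = 1)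
    (hV : Disjoint (h '' headTrue) headTrue) {f : 𝒞 ≃ₜ 𝒞}
    (hf : SupportedIn f (cons true '' rung)) : φ f = 1 := by
  obtain ⟨f', hf', rfl⟩ := exists_liftHom_eq hf
  rw [← commutatorElement_ladderHomeo_ladderShift hf', map_commutatorElement]
  exact (supportedIn_liftHom _).map_commutatorElement_eq_one (supportedIn_liftHom _) hh hV

theorem map_eq_one_of_supportedIn_cylinder (hh : φ h = 1) (hV : Disjoint (h '' headTrue) headTrue)
    {f : 𝒞 ≃ₜ 𝒞} {y : 𝒞} {n : ℕ} (hn : 1 ≤ n) (hf : SupportedIn f (cylinder y n)) : φ f = 1 := by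
  obtain ⟨t, ht⟩ := exists_image_cylinder_eq (y' := cons true (cons true fun _ => false)) hn
    (show 1 ≤ 3 by norm_num)
  have := map_eq_one_of_supportedIn_image_cons_rung hh hV (f := t * f * t⁻¹)
    (by rw [image_cons_rung, ← ht]; exact hf.conj t)
  simpa using this

theorem map_eq_one_of_supportedIn_compl_cylinder (hh : φ h = 1)
    (hV : Disjoint (h '' headTrue) headTrue) {f : 𝒞 ≃ₜ 𝒞} {y : 𝒞} {n : ℕ} (hn : 1 ≤ n)
    (hf : SupportedIn f (cylinder y n)ᶜ) : φ f = 1 := by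
  obtain ⟨t, ht⟩ := exists_image_cylinder_eq (y' := fun _ => true) hn le_rfl
  have := map_eq_one_of_supportedIn_cylinder hh hV (f := t * f * t⁻¹) le_rfl
    (by rw [← compl_headTrue, headTrue, ← ht, ← t.image_compl]; exact hf.conj t)
  simpa using this

theorem exists_map_eq_one_disjoint_image_headTrue [Countable H] (φ : (𝒞 ≃ₜ 𝒞) →* H) :
    ∃ h, φ h = 1 ∧ Disjoint (h '' headTrue) headTrue := by
  obtain ⟨g, hg, hφg⟩ := exists_ne_one_map_eq_one φ
  obtain ⟨x, n, hn, hdisj, -⟩ := exists_cylinder_disjoint_image hg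
  obtain ⟨t, ht⟩ := exists_image_headTrue_eq x hn
  refine ⟨t⁻¹ * g * t, by simp [hφg], ?_⟩
  rw [Homeomorph.image_mul, Homeomorph.image_mul, ht, ← image_inv_image t headTrue, ht,
    disjoint_image_iff (t⁻¹).injective]
  exact hdisj.symm

end Kernel

end CantorSpace

/-- Every group homomorphism from the homeomorphism group of the Cantor space
`ℕ → Bool` to a countable group is trivial (has trivial image). -/
theorem homeomorphGroup_cantor_hom_to_countable_trivial
    {H : Type*} [Group H] [Countable H]
    (φ : ((ℕ → Bool) ≃ₜ (ℕ → Bool)) →* H) :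
    ∀ g : (ℕ → Bool) ≃ₜ (ℕ → Bool), φ g = 1 := by
  obtain ⟨h, hh, hV⟩ := CantorSpace.exists_map_eq_one_disjoint_image_headTrue φ
  intro g
  rcases eq_or_ne g 1 with rfl | hg
  · exact map_one φ
  obtain ⟨x, n, hn, hdisj, z, hz⟩ := CantorSpace.exists_cylinder_disjoint_image hg
  obtain ⟨a, b, rfl, ha, hb⟩ :=
    g.exists_eq_mul_supportedIn (CantorSpace.isClopen_cylinder x n) hdisj
  rw [map_mul,
    CantorSpace.map_eq_one_of_supportedIn_compl_cylinder hh hV hn (ha.mono hz.subset_compl_left),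
    CantorSpace.map_eq_one_of_supportedIn_compl_cylinder hh hV hn hb, one_mul]
end

section
/- The homeomorphism group of the Cantor space is a perfect group: its commutator subgroup is the whole group, equivalently its abelianization is trivial. -/
namespace CantorPerfect

abbrev C := ℕ → Bool

def cons (b : Bool) (x : C) : C := fun n => Nat.casesOn n b x
def drop (k : ℕ) (x : C) : C := fun n => x (n + k)
@[simp] lemma cons_zero (b : Bool) (x : C) : cons b x 0 = b := rfl
@[simp] lemma cons_succ (b : Bool) (x : C) (n : ℕ) : cons b x (n+1) = x n := rfl
@[simp] lemma cons_one (b : Bool) (x : C) : cons b x 1 = x 0 := rfl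
@[simp] lemma cons_two (b : Bool) (x : C) : cons b x 2 = x 1 := rfl
@[simp] lemma cons_three (b : Bool) (x : C) : cons b x 3 = x 2 := rfl
@[simp] lemma drop_apply (k : ℕ) (x : C) (n : ℕ) : drop k x n = x (n+k) := rfl

lemma cons_tail (x : C) : cons (x 0) (drop 1 x) = x := by
  funext n; cases n <;> rfl

lemma continuous_cons (b : Bool) : Continuous (cons b) := by
  apply continuous_pi; intro n
  cases n with
  | zero => exact continuous_const
  | succ n => exact continuous_apply n

lemma continuous_drop (k : ℕ) : Continuous (drop k) := by
  apply continuous_pi; intro n; exact continuous_apply (n+k)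

lemma isClopen_coord (i : ℕ) (b : Bool) : IsClopen {x : C | x i = b} :=
  (isClopen_discrete {b}).preimage (continuous_apply i)

lemma continuous_ite (p : C → Prop) [DecidablePred p] (hp : IsClopen {x | p x})
    {f g : C → C} (hf : Continuous f) (hg : Continuous g) :
    Continuous fun x => if p x then f x else g x := by
  apply hf.if _ hg
  intro a ha
  rw [hp.frontier_eq] at ha
  exact absurd ha (Set.notMem_empty a)

/-- every open set contains a cylinder around each of its points -/
lemma exists_cyl {s : Set C} (hs : IsOpen s) {x : C} (hx : x ∈ s) :
    ∃ N, 0 < N ∧ ∀ y : C, (∀ i < N, y i = x i) → y ∈ s := by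
  rcases (isOpen_pi_iff.mp hs) x hx with ⟨I, u, h1, h2⟩
  rcases I.bddAbove with ⟨N, hN⟩
  refine ⟨N+1, Nat.succ_pos _, fun y hy => h2 ?_⟩
  intro i hi
  have : y i = x i := hy i (Nat.lt_succ_of_le (hN hi))
  rw [this]
  exact (h1 i hi).2

noncomputable local instance (p : Prop) : Decidable p := Classical.propDecidable p

/-- apply `h` to the part of `z` after (not including) the first `false`;
identity if `z` is all-`true`. -/
noncomputable def ext1 (h : C → C) (z : C) : C :=
  if hz : ∃ n, z n ≠ true then
    (fun i => if i ≤ Nat.find hz then z i else h (fun j => z (Nat.find hz + 1 + j)) (i - (Nat.find hz + 1)))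
  else z

lemma ext1_of_allTrue (h : C → C) {z : C} (hz : ∀ n, z n = true) : ext1 h z = z := by
  rw [ext1, dif_neg]; push_neg; simpa using hz

lemma ext1_apply_of_exists (h : C → C) {z : C} (hz : ∃ n, z n ≠ true) :
    ext1 h z = fun i => if i ≤ Nat.find hz then z i
      else h (fun j => z (Nat.find hz + 1 + j)) (i - (Nat.find hz + 1)) := by
  rw [ext1, dif_pos hz]

lemma ext1_cons_false (h : C → C) (y : C) :
    ext1 h (cons false y) = cons false (h y) := by
  have hz : ∃ n, cons false y n ≠ true := ⟨0, by simp⟩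
  have hfind : Nat.find hz = 0 := by simp [Nat.find_eq_zero]
  rw [ext1_apply_of_exists h hz, hfind]
  funext i
  cases i with
  | zero => simp
  | succ i =>
      rw [if_neg (by omega)]
      rw [show (fun j => cons false y (0 + 1 + j)) = y from by
        funext j; rw [show 0 + 1 + j = j + 1 by omega]; simp]
      simp

lemma ext1_cons_true (h : C → C) (y : C) :
    ext1 h (cons true y) = cons true (ext1 h y) := by
  by_cases hy : ∃ n, y n ≠ true
  · have hz : ∃ n, cons true y n ≠ true := ⟨Nat.find hy + 1, by simpa using Nat.find_spec hy⟩
    have hfind : Nat.find hz = Nat.find hy + 1 := by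
      rw [Nat.find_eq_iff]
      constructor
      · simpa using Nat.find_spec hy
      · intro j hj
        cases j with
        | zero => simp
        | succ k => simpa using Nat.find_min hy (by omega)
    rw [ext1_apply_of_exists h hz, hfind, ext1_apply_of_exists h hy]
    funext i
    cases i with
    | zero => simp
    | succ i =>
        simp only [cons_succ]
        rw [show (fun j => cons true y (Nat.find hy + 1 + 1 + j))
            = (fun j => y (Nat.find hy + 1 + j)) from by
          funext j
          rw [show Nat.find hy + 1 + 1 + j = (Nat.find hy + 1 + j) + 1 by omega]
          simp]
        by_cases hle : i ≤ Nat.find hy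
        · rw [if_pos (by omega), if_pos hle]
        · rw [if_neg (by omega), if_neg hle]
          congr 1
          omega
  · have hz : ¬ ∃ n, cons true y n ≠ true := by
      push_neg at hy ⊢
      intro n; cases n <;> simp [hy]
    rw [ext1, dif_neg hz, ext1, dif_neg hy]

lemma ext1_inv (h h' : C → C) (hinv : ∀ y, h' (h y) = y) (z : C) :
    ext1 h' (ext1 h z) = z := by
  by_cases hz : ∃ n, z n ≠ true
  · have hz1 := ext1_apply_of_exists h hz
    have hspec : z (Nat.find hz) ≠ true := Nat.find_spec hz
    have hw : ∃ m, ext1 h z m ≠ true := by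
      refine ⟨Nat.find hz, ?_⟩
      rw [hz1]; simpa using hspec
    have hwfind : Nat.find hw = Nat.find hz := by
      rw [Nat.find_eq_iff]
      refine ⟨by rw [hz1]; simpa using hspec, fun j hj => ?_⟩
      rw [hz1]
      simp only [if_pos (le_of_lt hj), ne_eq, not_not]
      simpa using Nat.find_min hz hj
    rw [ext1_apply_of_exists h' hw, hwfind]
    funext i
    by_cases hle : i ≤ Nat.find hz
    · rw [if_pos hle, hz1]
      beta_reduce
      rw [if_pos hle]
    · rw [if_neg hle]
      rw [show (fun j => ext1 h z (Nat.find hz + 1 + j))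
          = h (fun j => z (Nat.find hz + 1 + j)) from by
        funext j
        rw [hz1]
        beta_reduce
        rw [if_neg (by omega)]
        congr 1
        omega]
      rw [hinv]
      show z (Nat.find hz + 1 + (i - (Nat.find hz + 1))) = z i
      congr 1
      omega
  · have h1 : ext1 h z = z := by rw [ext1, dif_neg hz]
    rw [h1, ext1, dif_neg hz]

/-- the first coordinates of `ext1 h z` agree with `z` up to and including the
first `false`. -/
lemma ext1_apply_zero (h : C → C) (z : C) : ext1 h z 0 = z 0 := by
  by_cases hz : ∃ n, z n ≠ true
  · rw [ext1_apply_of_exists h hz]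
    simp
  · rw [ext1, dif_neg hz]

lemma continuous_ext1 {h : C → C} (hc : Continuous h) : Continuous (ext1 h) := by
  rw [continuous_iff_continuousAt]
  intro x
  by_cases hx : ∃ n, x n ≠ true
  · set n := Nat.find hx with hn
    have hG : Continuous fun (w : C) => (fun i =>
        if i ≤ n then w i else h (fun j => w (n + 1 + j)) (i - (n+1)) : C) := by
      apply continuous_pi
      intro i
      by_cases hi : i ≤ n
      · simp only [if_pos hi]; exact continuous_apply i
      · simp only [if_neg hi]
        exact (continuous_apply _).comp (hc.comp (continuous_pi fun j => continuous_apply _))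
    apply ContinuousAt.congr (hG.continuousAt)
    have hopen : IsOpen {w : C | ∀ j ≤ n, w j = x j} := by
      have : {w : C | ∀ j ≤ n, w j = x j} = ⋂ j ∈ Finset.range (n+1), {w : C | w j = x j} := by
        ext w
        simp only [Set.mem_setOf_eq, Set.mem_iInter, Finset.mem_range]
        constructor
        · intro hw j hj; exact hw j (by omega)
        · intro hw j hj; exact hw j (by omega)
      rw [this]
      exact isOpen_biInter_finset fun j _ =>
        ((isClopen_discrete {x j}).preimage (continuous_apply j)).2
    have hmem : x ∈ {w : C | ∀ j ≤ n, w j = x j} := fun j _ => rfl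
    filter_upwards [hopen.mem_nhds hmem] with w hw
    -- show G w = ext1 h w on this neighborhood
    have hwex : ∃ m, w m ≠ true := ⟨n, by rw [hw n le_rfl]; exact hn ▸ Nat.find_spec hx⟩
    have hwfind : Nat.find hwex = n := by
      rw [Nat.find_eq_iff]
      refine ⟨by rw [hw n le_rfl]; exact hn ▸ Nat.find_spec hx, fun j hj => ?_⟩
      rw [hw j (le_of_lt hj)]
      simpa using Nat.find_min hx (hn ▸ hj)
    rw [ext1_apply_of_exists h hwex, hwfind]
  · -- all true point
    push_neg at hx
    have hxall : ext1 h x = x := ext1_of_allTrue h hx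
    rw [ContinuousAt, hxall, tendsto_pi_nhds]
    intro i
    apply Filter.Tendsto.congr' _ (tendsto_const_nhds (x := x i))
    have hopen : IsOpen {w : C | ∀ j ≤ i, w j = x j} := by
      have : {w : C | ∀ j ≤ i, w j = x j} = ⋂ j ∈ Finset.range (i+1), {w : C | w j = x j} := by
        ext w
        simp only [Set.mem_setOf_eq, Set.mem_iInter, Finset.mem_range]
        constructor
        · intro hw j hj; exact hw j (by omega)
        · intro hw j hj; exact hw j (by omega)
      rw [this]
      exact isOpen_biInter_finset fun j _ =>
        ((isClopen_discrete {x j}).preimage (continuous_apply j)).2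
    have hmem : x ∈ {w : C | ∀ j ≤ i, w j = x j} := fun j _ => rfl
    filter_upwards [hopen.mem_nhds hmem] with w hw
    by_cases hwex : ∃ m, w m ≠ true
    · rw [ext1_apply_of_exists h hwex]
      have : i < Nat.find hwex := by
        rcases Nat.lt_or_ge i (Nat.find hwex) with h1 | h1
        · exact h1
        · exfalso
          exact Nat.find_spec hwex (by rw [hw (Nat.find hwex) h1, hx])
      beta_reduce
      rw [if_pos (le_of_lt this)]
      exact (hw i le_rfl).symm
    · rw [ext1, dif_neg hwex, hw i le_rfl]


/-! ### The shift homeomorphism `t` -/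

def tf (x : C) : C :=
  if x 0 = false then cons true (cons true x)
  else if x 1 = true then cons true (cons true (cons true (drop 2 x)))
  else if x 2 = true then cons false (drop 3 x)
  else cons true (cons false (drop 3 x))

def ti (y : C) : C :=
  if y 0 = false then cons true (cons false (cons true (drop 1 y)))
  else if y 1 = false then cons true (cons false (cons false (drop 2 y)))
  else if y 2 = false then drop 2 y
  else cons true (cons true (drop 3 y))

lemma tf_ti (y : C) : tf (ti y) = y := by
  by_cases h0 : y 0 = false
  · rw [ti, if_pos h0, tf, if_neg (by simp), if_neg (by simp), if_pos (by simp)]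
    funext n
    rcases n with _ | n
    · simp [h0]
    · rfl
  · by_cases h1 : y 1 = false
    · rw [ti, if_neg h0, if_pos h1, tf, if_neg (by simp), if_neg (by simp),
        if_neg (by simp)]
      funext n
      rcases n with _ | (_ | n)
      · simp at h0; simp [h0]
      · simp [h1]
      · rfl
    · by_cases h2 : y 2 = false
      · rw [ti, if_neg h0, if_neg h1, if_pos h2, tf, if_pos (by simpa using h2)]
        funext n
        rcases n with _ | (_ | n)
        · simp at h0; simp [h0]
        · simp at h1; simp [h1]
        · rfl
      · rw [ti, if_neg h0, if_neg h1, if_neg h2, tf, if_neg (by simp),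
          if_pos (by simp)]
        funext n
        rcases n with _ | (_ | (_ | n))
        · simp at h0; simp [h0]
        · simp at h1; simp [h1]
        · simp at h2; simp [h2]
        · rfl

lemma ti_tf (x : C) : ti (tf x) = x := by
  by_cases h0 : x 0 = false
  · rw [tf, if_pos h0, ti, if_neg (by simp), if_neg (by simp), if_pos (by simpa using h0)]
    funext n; rfl
  · by_cases h1 : x 1 = true
    · rw [tf, if_neg h0, if_pos h1, ti, if_neg (by simp), if_neg (by simp),
        if_neg (by simp)]
      funext n
      rcases n with _ | (_ | n)
      · simp at h0; simp [h0]
      · simp [h1]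
      · rfl
    · by_cases h2 : x 2 = true
      · rw [tf, if_neg h0, if_neg h1, if_pos h2, ti, if_pos (by simp)]
        funext n
        rcases n with _ | (_ | (_ | n))
        · simp at h0; simp [h0]
        · simp at h1; simp [h1]
        · simp [h2]
        · rfl
      · rw [tf, if_neg h0, if_neg h1, if_neg h2, ti, if_neg (by simp),
          if_pos (by simp)]
        funext n
        rcases n with _ | (_ | (_ | n))
        · simp at h0; simp [h0]
        · simp at h1; simp [h1]
        · simp at h2; simp [h2]
        · rfl

lemma continuous_tf : Continuous tf := by
  unfold tf
  apply continuous_ite _ (isClopen_coord 0 false)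
  · exact (continuous_cons true).comp (continuous_cons true)
  apply continuous_ite _ (isClopen_coord 1 true)
  · exact (continuous_cons true).comp <| (continuous_cons true).comp <|
      (continuous_cons true).comp (continuous_drop 2)
  apply continuous_ite _ (isClopen_coord 2 true)
  · exact (continuous_cons false).comp (continuous_drop 3)
  · exact (continuous_cons true).comp <| (continuous_cons false).comp (continuous_drop 3)

lemma continuous_ti : Continuous ti := by
  unfold ti
  apply continuous_ite _ (isClopen_coord 0 false)
  · exact (continuous_cons true).comp <| (continuous_cons false).comp <|
      (continuous_cons true).comp (continuous_drop 1)
  apply continuous_ite _ (isClopen_coord 1 false)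
  · exact (continuous_cons true).comp <| (continuous_cons false).comp <|
      (continuous_cons false).comp (continuous_drop 2)
  apply continuous_ite _ (isClopen_coord 2 false)
  · exact continuous_drop 2
  · exact (continuous_cons true).comp <| (continuous_cons true).comp (continuous_drop 3)

def tHomeo : C ≃ₜ C where
  toFun := tf
  invFun := ti
  left_inv := ti_tf
  right_inv := tf_ti
  continuous_toFun := continuous_tf
  continuous_invFun := continuous_ti

/-! ### The homeomorphism `a` built from a homeomorphism fixing `{x | x 0 = true}` -/

section A

variable (f : C ≃ₜ C)

def hmapF : C → C := fun y => drop 1 (f (cons false y))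

lemma continuous_hmapF : Continuous (hmapF f) :=
  (continuous_drop 1).comp (f.continuous.comp (continuous_cons false))

lemma symm_fixes_true (hf : ∀ y, y 0 = true → f y = y) :
    ∀ y, y 0 = true → f.symm y = y := by
  intro y hy
  have := hf y hy
  conv_lhs => rw [← this]
  exact f.symm_apply_apply y

lemma f_preserves_false (hf : ∀ y, y 0 = true → f y = y) : ∀ y, y 0 = false → (f y) 0 = false := by
  intro y hy
  by_contra hcon
  have h1 : (f y) 0 = true := by
    cases hb : (f y) 0
    · exact absurd hb hcon
    · rfl
  have := hf (f y) h1
  have h2 : f y = y := f.injective this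
  rw [h2] at h1
  rw [h1] at hy
  exact Bool.noConfusion hy

lemma cons_false_hmapF (hf : ∀ y, y 0 = true → f y = y) : ∀ y, cons false (hmapF f y) = f (cons false y) := by
  intro y
  have h0 : (f (cons false y)) 0 = false :=
    f_preserves_false f hf (cons false y) (by simp)
  funext n
  rcases n with _ | n
  · simp [h0]
  · rfl

lemma hmapF_inv (hf : ∀ y, y 0 = true → f y = y) : ∀ y, hmapF f.symm (hmapF f y) = y := by
  intro y
  have hsf : ∀ z, z 0 = true → f.symm z = z := symm_fixes_true f hf
  unfold hmapF
  rw [show cons false (drop 1 (f (cons false y))) = f (cons false y) from by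
    have h0 : (f (cons false y)) 0 = false :=
      f_preserves_false f hf (cons false y) (by simp)
    funext n; rcases n with _ | n
    · simp [h0]
    · rfl]
  rw [f.symm_apply_apply]
  funext n; rfl

/-- `ext1 (hmapF f)` coincides with `f` on `{x | x 0 = false}` -/
lemma ext1_hmapF_false (hf : ∀ y, y 0 = true → f y = y) {w : C} (hw : w 0 = false) : ext1 (hmapF f) w = f w := by
  have hrep : w = cons false (drop 1 w) := by
    funext n; rcases n with _ | n
    · simp [hw]
    · rfl
  conv_lhs => rw [hrep]
  rw [ext1_cons_false]
  rw [cons_false_hmapF f hf]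
  rw [← hrep]

noncomputable def aFun (m : C → C) (x : C) : C :=
  if x 0 = true ∧ x 1 = false then x else ext1 m x

lemma continuous_aFun (m : C → C) (hm : Continuous m) : Continuous (aFun m) := by
  unfold aFun
  exact continuous_ite (fun x => x 0 = true ∧ x 1 = false)
    ((isClopen_coord 0 true).inter (isClopen_coord 1 false))
    continuous_id (continuous_ext1 hm)

lemma aFun_leftinv (m m' : C → C) (minv : ∀ y, m' (m y) = y) (x : C) :
    aFun m' (aFun m x) = x := by
  by_cases hc : x 0 = true ∧ x 1 = false
  · unfold aFun
    rw [if_pos hc, if_pos hc]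
  · unfold aFun
    rw [if_neg hc]
    have hc' : ¬ (ext1 m x 0 = true ∧ ext1 m x 1 = false) := by
      intro hcon
      apply hc
      have h0 : ext1 m x 0 = x 0 := ext1_apply_zero m x
      cases hx0 : x 0
      · rw [hx0] at h0; rw [h0] at hcon; exact absurd hcon.1 (by simp)
      · refine ⟨rfl, ?_⟩
        have hrep : x = cons true (drop 1 x) := by
          funext n; rcases n with _ | n
          · simp [hx0]
          · rfl
        have h1 : ext1 m x 1 = x 1 := by
          conv_lhs => rw [hrep, ext1_cons_true]
          show ext1 m (drop 1 x) 0 = x 1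
          rw [ext1_apply_zero]
          rfl
        rw [← h1]; exact hcon.2
    rw [if_neg hc']
    exact ext1_inv m m' minv x

noncomputable def aHomeo (hf : ∀ y, y 0 = true → f y = y) : C ≃ₜ C where
  toFun := aFun (hmapF f)
  invFun := aFun (hmapF f.symm)
  left_inv := aFun_leftinv (hmapF f) (hmapF f.symm) (hmapF_inv f hf)
  right_inv := by
    have hf' : ∀ y, y 0 = true → f.symm y = y := symm_fixes_true f hf
    have := hmapF_inv f.symm hf'
    rw [Homeomorph.symm_symm] at this
    exact aFun_leftinv (hmapF f.symm) (hmapF f) this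
  continuous_toFun := continuous_aFun _ (continuous_hmapF f)
  continuous_invFun := continuous_aFun _ (continuous_hmapF f.symm)

end A

/-! ### The swindle: `f` fixing `{x | x 0 = true}` is a commutator -/

section Key

variable (f : C ≃ₜ C)

lemma key (hf : ∀ y, y 0 = true → f y = y) (x : C) :
    aFun (hmapF f) (tf (aFun (hmapF f.symm) (ti x))) = f x := by
  have hf' : ∀ y, y 0 = true → f.symm y = y := symm_fixes_true f hf
  have hinv' : ∀ y, hmapF f (hmapF f.symm y) = y := by
    have := hmapF_inv f.symm hf'
    rwa [Homeomorph.symm_symm] at this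
  by_cases h0 : x 0 = false
  · -- Case 1
    rw [ti, if_pos h0]
    rw [show aFun (hmapF f.symm) (cons true (cons false (cons true (drop 1 x))))
        = cons true (cons false (cons true (drop 1 x))) from by
      unfold aFun; rw [if_pos ⟨rfl, rfl⟩]]
    rw [tf, if_neg (by simp), if_neg (by simp), if_pos (by simp)]
    rw [show cons false (drop 3 (cons true (cons false (cons true (drop 1 x))))) = x from by
      funext n; rcases n with _ | n
      · simp [h0]
      · rfl]
    unfold aFun
    rw [if_neg (by simp [h0])]
    exact ext1_hmapF_false f hf h0
  · have h0' : x 0 = true := by cases hb : x 0; exact absurd hb h0; rfl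
    by_cases h1 : x 1 = false
    · -- Case 2
      rw [ti, if_neg (by simp [h0']), if_pos h1]
      rw [show aFun (hmapF f.symm) (cons true (cons false (cons false (drop 2 x))))
          = cons true (cons false (cons false (drop 2 x))) from by
        unfold aFun; rw [if_pos ⟨rfl, rfl⟩]]
      rw [tf, if_neg (by simp), if_neg (by simp), if_neg (by simp)]
      rw [show cons true (cons false (drop 3 (cons true (cons false (cons false (drop 2 x)))))) = x from by
        funext n; rcases n with _ | (_ | n)
        · simp [h0']
        · simp [h1]
        · rfl]
      rw [show aFun (hmapF f) x = x from by unfold aFun; rw [if_pos ⟨h0', h1⟩]]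
      rw [hf x h0']
    · have h1' : x 1 = true := by cases hb : x 1; exact absurd hb h1; rfl
      by_cases h2 : x 2 = false
      · -- Case 3
        rw [ti, if_neg (by simp [h0']), if_neg (by simp [h1']), if_pos h2]
        have hu0 : (drop 2 x) 0 = false := by simpa using h2
        rw [show aFun (hmapF f.symm) (drop 2 x) = f.symm (drop 2 x) from by
          unfold aFun; rw [if_neg (by simp [h2])]
          exact ext1_hmapF_false f.symm hf' hu0]
        have hw0 : (f.symm (drop 2 x)) 0 = false :=
          f_preserves_false f.symm hf' _ hu0
        rw [tf, if_pos hw0]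
        unfold aFun
        rw [if_neg (by simp)]
        rw [ext1_cons_true, ext1_cons_true]
        rw [ext1_hmapF_false f hf hw0]
        rw [f.apply_symm_apply]
        rw [hf x h0']
        funext n; rcases n with _ | (_ | n)
        · simp [h0']
        · simp [h1']
        · rfl
      · have h2' : x 2 = true := by cases hb : x 2; exact absurd hb h2; rfl
        -- Case 4
        rw [ti, if_neg (by simp [h0']), if_neg (by simp [h1']), if_neg (by simp [h2'])]
        rw [show aFun (hmapF f.symm) (cons true (cons true (drop 3 x)))
            = cons true (cons true (ext1 (hmapF f.symm) (drop 3 x))) from by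
          unfold aFun; rw [if_neg (by simp)]
          rw [ext1_cons_true, ext1_cons_true]]
        rw [tf, if_neg (by simp), if_pos (by simp)]
        rw [show drop 2 (cons true (cons true (ext1 (hmapF f.symm) (drop 3 x))))
            = ext1 (hmapF f.symm) (drop 3 x) from by funext n; rfl]
        unfold aFun
        rw [if_neg (by simp)]
        rw [ext1_cons_true, ext1_cons_true, ext1_cons_true]
        rw [ext1_inv (hmapF f.symm) (hmapF f) hinv' (drop 3 x)]
        rw [hf x h0']
        funext n; rcases n with _ | (_ | (_ | n))
        · simp [h0']
        · simp [h1']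
        · simp [h2']
        · rfl

open scoped commutatorElement in
lemma mem_commutator_of_fixes_true (hf : ∀ y, y 0 = true → f y = y) :
    f ∈ commutator (C ≃ₜ C) := by
  have hc : ⁅aHomeo f hf, tHomeo⁆ = f := by
    apply Homeomorph.ext
    intro x
    show aFun (hmapF f) (tf (aFun (hmapF f.symm) (ti x))) = f x
    exact key f hf x
  have hmem : ⁅aHomeo f hf, tHomeo⁆ ∈ commutator (C ≃ₜ C) := by
    rw [commutator_def]
    exact Subgroup.commutator_mem_commutator (Subgroup.mem_top _) (Subgroup.mem_top _)
  rwa [hc] at hmem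

end Key

/-! ### Moving any cylinder to `{x | x 0 = true}` -/

def af (x : C) : C :=
  if x 0 = false then cons false x
  else if x 1 = true then drop 1 x
  else cons false (cons true (drop 2 x))

def ai (y : C) : C :=
  if y 0 = true then cons true y
  else if y 1 = true then cons true (cons false (drop 2 y))
  else drop 1 y

lemma ai_af (x : C) : ai (af x) = x := by
  by_cases h0 : x 0 = false
  · rw [af, if_pos h0, ai, if_neg (by simp [h0]), if_neg (by simp [h0])]
    funext n; rfl
  · have h0' : x 0 = true := by cases hb : x 0; exact absurd hb h0; rfl
    by_cases h1 : x 1 = true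
    · rw [af, if_neg h0, if_pos h1, ai, if_pos (by simpa using h1)]
      funext n; rcases n with _ | n
      · simp [h0']
      · rfl
    · rw [af, if_neg h0, if_neg h1, ai, if_neg (by simp), if_pos (by simp)]
      have h1' : x 1 = false := by cases hb : x 1; rfl; exact absurd hb h1
      funext n; rcases n with _ | (_ | n)
      · simp [h0']
      · simp [h1']
      · rfl

lemma af_ai (y : C) : af (ai y) = y := by
  by_cases h0 : y 0 = true
  · rw [ai, if_pos h0, af, if_neg (by simp), if_pos (by simpa using h0)]
    funext n; rfl
  · have h0' : y 0 = false := by cases hb : y 0; rfl; exact absurd hb h0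
    by_cases h1 : y 1 = true
    · rw [ai, if_neg h0, if_pos h1, af, if_neg (by simp), if_neg (by simp)]
      funext n; rcases n with _ | (_ | n)
      · simp [h0']
      · simp [h1]
      · rfl
    · have h1' : y 1 = false := by cases hb : y 1; rfl; exact absurd hb h1
      rw [ai, if_neg h0, if_neg h1, af, if_pos (by simp [h1'])]
      funext n; rcases n with _ | n
      · simp [h0']
      · rfl

def alphaHomeo : C ≃ₜ C where
  toFun := af
  invFun := ai
  left_inv := ai_af
  right_inv := af_ai
  continuous_toFun := by
    unfold af
    apply continuous_ite _ (isClopen_coord 0 false)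
    · exact (continuous_cons false).comp continuous_id
    apply continuous_ite _ (isClopen_coord 1 true)
    · exact continuous_drop 1
    · exact (continuous_cons false).comp <| (continuous_cons true).comp (continuous_drop 2)
  continuous_invFun := by
    unfold ai
    apply continuous_ite _ (isClopen_coord 0 true)
    · exact (continuous_cons true).comp continuous_id
    apply continuous_ite _ (isClopen_coord 1 true)
    · exact (continuous_cons true).comp <| (continuous_cons false).comp (continuous_drop 2)
    · exact continuous_drop 1

def notHomeo : Bool ≃ₜ Bool where
  toFun := not
  invFun := not
  left_inv := Bool.not_not
  right_inv := Bool.not_not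
  continuous_toFun := continuous_of_discreteTopology
  continuous_invFun := continuous_of_discreteTopology

def flipHomeo (z : C) : C ≃ₜ C :=
  Homeomorph.piCongrRight (fun i => if z i = true then Homeomorph.refl Bool else notHomeo)

lemma flipHomeo_symm_apply (z v : C) (i : ℕ) :
    (flipHomeo z).symm v i
      = (if z i = true then Homeomorph.refl Bool else notHomeo).symm (v i) := rfl

def rho : ℕ → (C ≃ₜ C)
  | 0 => Homeomorph.refl C
  | (L+1) => (rho L).trans alphaHomeo.symm

lemma rho_spec : ∀ L, ∀ y : C, y 0 = true → ∀ i < L + 1, rho L y i = true := by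
  intro L
  induction L with
  | zero =>
      intro y hy i hi
      interval_cases i
      exact hy
  | succ L ih =>
      intro y hy i hi
      have hv := ih y hy
      have hval : rho (L+1) y = ai (rho L y) := rfl
      have hv0 : rho L y 0 = true := hv 0 (by omega)
      rw [hval, ai, if_pos hv0]
      rcases i with _ | i
      · rfl
      · simpa using hv i (by omega)

noncomputable def phi (z : C) (L : ℕ) : C ≃ₜ C :=
  ((rho (L-1)).trans (flipHomeo z).symm).symm

lemma phi_symm_spec (z : C) (L : ℕ) (hL : 0 < L) :
    ∀ y : C, y 0 = true → ∀ i < L, (phi z L).symm y i = z i := by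
  intro y hy i hi
  have h1 : (phi z L).symm y = (flipHomeo z).symm (rho (L-1) y) := by
    rw [phi, Homeomorph.symm_symm]
    rfl
  rw [h1, flipHomeo_symm_apply]
  have h2 : rho (L-1) y i = true := rho_spec (L-1) y hy i (by omega)
  rw [h2]
  by_cases hz : z i = true
  · rw [if_pos hz, hz]; rfl
  · rw [if_neg hz]
    cases hb : z i
    · rfl
    · exact absurd hb hz

lemma mem_commutator_of_fixes_cylinder (f : C ≃ₜ C) (z : C) (L : ℕ) (hL : 0 < L)
    (hfix : ∀ y : C, (∀ i < L, y i = z i) → f y = y) :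
    f ∈ commutator ((ℕ → Bool) ≃ₜ (ℕ → Bool)) := by
  set φ := phi z L with hφ
  set c : C ≃ₜ C := φ * f * φ⁻¹ with hcdef
  have hc : ∀ y : C, y 0 = true → c y = y := by
    intro y hy
    have hval : c y = φ (f (φ.symm y)) := rfl
    rw [hval, hfix (φ.symm y) (phi_symm_spec z L hL y hy), Homeomorph.apply_symm_apply]
  have hcmem : c ∈ commutator ((ℕ → Bool) ≃ₜ (ℕ → Bool)) :=
    mem_commutator_of_fixes_true c hc
  have hmem := (inferInstance : (commutator ((ℕ → Bool) ≃ₜ (ℕ → Bool))).Normal).conj_mem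
    _ hcmem φ⁻¹
  have heq : φ⁻¹ * c * (φ⁻¹)⁻¹ = f := by
    rw [hcdef]
    group
  rwa [heq] at hmem


/-! ### Fragmentation and the main theorem -/

lemma isClopen_cylinder (x : C) (N : ℕ) : IsClopen {y : C | ∀ i < N, y i = x i} := by
  have heq : {y : C | ∀ i < N, y i = x i} = ⋂ i ∈ Finset.range N, {y : C | y i = x i} := by
    ext y
    simp only [Set.mem_setOf_eq, Set.mem_iInter, Finset.mem_range]
  rw [heq]
  constructor
  · exact isClosed_biInter fun i _ => (isClopen_coord i (x i)).1
  · exact isOpen_biInter_finset fun i _ => (isClopen_coord i (x i)).2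

theorem perfect : commutator ((ℕ → Bool) ≃ₜ (ℕ → Bool)) = ⊤ := by
  rw [Subgroup.eq_top_iff']
  intro g
  by_cases hg1 : g = 1
  · rw [hg1]; exact Subgroup.one_mem _
  have hx : ∃ x : C, g x ≠ x := by
    by_contra h
    push_neg at h
    exact hg1 (Homeomorph.ext h)
  obtain ⟨x, hgx⟩ := hx
  have hjex : ∃ j, g x j ≠ x j := by
    by_contra h
    push_neg at h
    exact hgx (funext h)
  obtain ⟨j, hj⟩ := hjex
  have hopen : IsOpen {y : C | g y j = g x j} :=
    ((isClopen_discrete {g x j}).preimage ((continuous_apply j).comp g.continuous)).2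
  obtain ⟨N₀, hN₀pos, hN₀⟩ := exists_cyl hopen (show x ∈ {y : C | g y j = g x j} from rfl)
  set N := max N₀ (j + 2) with hN
  set inU : C → Prop := fun y => ∀ i < N, y i = x i with hinU
  have hUg : ∀ y, inU y → g y j = g x j := fun y hy =>
    hN₀ y fun i hi => hy i (lt_of_lt_of_le hi (le_max_left _ _))
  have hjN : j < N := lt_of_lt_of_le (by omega) (le_max_right _ _)
  have key1 : ∀ y, inU y → ¬ inU (g y) := by
    intro y hy hcon
    have h1 : g y j = g x j := hUg y hy
    have h2 : g y j = x j := hcon j hjN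
    rw [h1] at h2
    exact hj h2
  set s : C → C := fun y => if inU y then g y else if inU (g.symm y) then g.symm y else y
    with hs
  have hsinv : Function.Involutive s := by
    intro y
    by_cases hy : inU y
    · rw [hs]
      simp only
      rw [if_pos hy, if_neg (key1 y hy), if_pos (by rw [g.symm_apply_apply]; exact hy),
        g.symm_apply_apply]
    · by_cases hy2 : inU (g.symm y)
      · rw [hs]
        simp only
        rw [if_neg hy, if_pos hy2, if_pos hy2, g.apply_symm_apply]
      · rw [hs]
        simp only
        rw [if_neg hy, if_neg hy2, if_neg hy, if_neg hy2]
  have hUclopen : IsClopen {y : C | inU y} := isClopen_cylinder x N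
  have hU2clopen : IsClopen {y : C | inU (g.symm y)} :=
    hUclopen.preimage g.symm.continuous
  have hscont : Continuous s := by
    rw [hs]
    apply continuous_ite _ hUclopen g.continuous
    apply continuous_ite _ hU2clopen g.symm.continuous continuous_id
  set S : C ≃ₜ C :=
    ⟨⟨s, s, hsinv.leftInverse, hsinv.rightInverse⟩, hscont, hscont⟩ with hS
  set k : C ≃ₜ C := S⁻¹ * g with hk
  have hkfix : ∀ y : C, (∀ i < N, y i = x i) → k y = y := by
    intro y hy
    have hval : k y = s (g y) := rfl
    rw [hval, hs]
    simp only
    rw [if_neg (key1 y hy), if_pos (by rw [g.symm_apply_apply]; exact hy),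
      g.symm_apply_apply]
  have hkmem : k ∈ commutator ((ℕ → Bool) ≃ₜ (ℕ → Bool)) :=
    mem_commutator_of_fixes_cylinder k x N (lt_of_lt_of_le (by omega) (le_max_right _ _)) hkfix
  -- now the support of S avoids a cylinder around w
  set w : C := Function.update x (j+1) (!(x (j+1))) with hw
  have hw1 : ¬ inU w := by
    intro hcon
    have := hcon (j+1) (lt_of_lt_of_le (by omega) (le_max_right _ _))
    rw [hw, Function.update_self] at this
    exact (x (j+1)).not_ne_self this
  have hw2 : ¬ inU (g.symm w) := by
    intro hcon
    have h1 : g (g.symm w) j = g x j := hUg _ hcon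
    rw [g.apply_symm_apply] at h1
    have h2 : w j = x j := by
      rw [hw, Function.update_of_ne (by omega)]
    rw [h2] at h1
    exact hj h1.symm
  have hwopen : IsOpen {y : C | ¬ inU y ∧ ¬ inU (g.symm y)} := by
    have : {y : C | ¬ inU y ∧ ¬ inU (g.symm y)}
        = ({y : C | inU y} ∪ {y : C | inU (g.symm y)})ᶜ := by
      ext y
      simp [Set.mem_union, not_or]
    rw [this]
    exact (hUclopen.union hU2clopen).compl.2
  obtain ⟨L, hLpos, hL⟩ := exists_cyl hwopen (show w ∈ _ from ⟨hw1, hw2⟩)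
  have hSfix : ∀ y : C, (∀ i < L, y i = w i) → S y = y := by
    intro y hy
    obtain ⟨hy1, hy2⟩ := hL y hy
    have hval : S y = s y := rfl
    rw [hval, hs]
    simp only
    rw [if_neg hy1, if_neg hy2]
  have hSmem : S ∈ commutator ((ℕ → Bool) ≃ₜ (ℕ → Bool)) :=
    mem_commutator_of_fixes_cylinder S w L hLpos hSfix
  have hprod : g = S * k := by
    rw [hk]
    group
  rw [hprod]
  exact Subgroup.mul_mem _ hSmem hkmem

end CantorPerfect

/-- The homeomorphism group of the Cantor space `ℕ → Bool` is perfect: its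
commutator subgroup is the whole group. -/
theorem homeomorphGroup_cantor_perfect :
    commutator ((ℕ → Bool) ≃ₜ (ℕ → Bool)) = ⊤ := by
  exact CantorPerfect.perfect
end

section
/- In a Hausdorff topological space, the union of finitely many compact totally disconnected subsets is totally disconnected. -/
open Set

/-- Key lemma: in a Hausdorff space, the union of two compact totally
disconnected sets is totally disconnected. -/
lemma isTotallyDisconnected_union_of_isCompact'
    {X : Type*} [TopologicalSpace X] [T2Space X] {A B : Set X}
    (hA : IsCompact A) (hB : IsCompact B)
    (tA : IsTotallyDisconnected A) (tB : IsTotallyDisconnected B) :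
    IsTotallyDisconnected (A ∪ B) := by
  intro C hC hCpre x hx y hy
  by_contra hxy
  set D := closure C with hDdef
  have hDpre : IsPreconnected D := hCpre.closure
  have hABc : IsCompact (A ∪ B) := hA.union hB
  have hDsub : D ⊆ A ∪ B := closure_minimal hC hABc.isClosed
  have hDcomp : IsCompact D := hABc.of_isClosed_subset isClosed_closure hDsub
  have hxD : x ∈ D := subset_closure hx
  have hyD : y ∈ D := subset_closure hy
  haveI : CompactSpace D := isCompact_iff_compactSpace.1 hDcomp
  haveI : PreconnectedSpace D := Subtype.preconnectedSpace hDpre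
  set A' : Set D := Subtype.val ⁻¹' A with hA'def
  set B' : Set D := Subtype.val ⁻¹' B with hB'def
  have hunion : A' ∪ B' = univ := by
    ext z
    simpa [hA'def, hB'def] using hDsub z.2
  have hA'closed : IsClosed A' := hA.isClosed.preimage continuous_subtype_val
  have hB'closed : IsClosed B' := hB.isClosed.preimage continuous_subtype_val
  have tdA' : IsTotallyDisconnected A' :=
    Topology.IsEmbedding.subtypeVal.isTotallyDisconnected
      (fun t ht hpre => tA t (ht.trans (image_preimage_subset _ _)) hpre)
  have tdB' : IsTotallyDisconnected B' :=
    Topology.IsEmbedding.subtypeVal.isTotallyDisconnected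
      (fun t ht hpre => tB t (ht.trans (image_preimage_subset _ _)) hpre)
  have hne : (⟨x, hxD⟩ : D) ≠ ⟨y, hyD⟩ := fun h => hxy (congrArg Subtype.val h)
  -- If A' = univ or B' = univ, then D is totally disconnected, contradiction.
  by_cases hAu : A' = univ
  · exact hne (tdA' univ (hAu ▸ subset_rfl) isPreconnected_univ (mem_univ _) (mem_univ _))
  by_cases hBu : B' = univ
  · exact hne (tdB' univ (hBu ▸ subset_rfl) isPreconnected_univ (mem_univ _) (mem_univ _))
  -- Otherwise find z ∈ A' \ B' and w ∈ B'.
  obtain ⟨z, hzB⟩ : ∃ z, z ∉ B' := by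
    by_contra h
    push_neg at h
    exact hBu (eq_univ_iff_forall.2 h)
  have hzA : z ∈ A' := (hunion ▸ mem_univ z).resolve_right hzB
  obtain ⟨w, hwA⟩ : ∃ w, w ∉ A' := by
    by_contra h
    push_neg at h
    exact hAu (eq_univ_iff_forall.2 h)
  have hwB : w ∈ B' := (hunion ▸ mem_univ w).resolve_left hwA
  -- Work in the compact t.d. Hausdorff subspace A'.
  haveI : CompactSpace A' := isCompact_iff_compactSpace.1 (hA'closed.isCompact)
  haveI : TotallyDisconnectedSpace A' := totallyDisconnectedSpace_subtype_iff.2 tdA'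
  have hUopen : IsOpen ((Subtype.val : A' → D) ⁻¹' B'ᶜ) :=
    hB'closed.isOpen_compl.preimage continuous_subtype_val
  obtain ⟨V, hV, hzV, hVU⟩ :=
    compact_exists_isClopen_in_isOpen hUopen (show (⟨z, hzA⟩ : A') ∈ _ from hzB)
  set W : Set D := Subtype.val '' V with hWdef
  have hWBc : W ⊆ B'ᶜ := by
    rintro _ ⟨v, hv, rfl⟩
    exact hVU hv
  have hWclosed : IsClosed W :=
    ((hV.1.isCompact).image continuous_subtype_val).isClosed
  have hWopen : IsOpen W := by
    obtain ⟨O, hO, hOV⟩ := isOpen_induced_iff.1 hV.2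
    have : W = O ∩ B'ᶜ := by
      apply Subset.antisymm
      · rintro _ ⟨v, hv, rfl⟩
        refine ⟨?_, hVU hv⟩
        rw [← hOV] at hv
        exact hv
      · rintro u ⟨huO, huB⟩
        have huA : u ∈ A' := (hunion ▸ mem_univ u).resolve_right huB
        exact ⟨⟨u, huA⟩, by rw [← hOV]; exact huO, rfl⟩
    rw [this]
    exact hO.inter hB'closed.isOpen_compl
  rcases isClopen_iff.1 ⟨hWclosed, hWopen⟩ with hW | hW
  · have : z ∈ W := ⟨⟨z, hzA⟩, hzV, rfl⟩
    rw [hW] at this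
    exact this
  · exact hWBc (hW ▸ mem_univ w) hwB

/-- In a Hausdorff space, the union of finitely many compact totally
disconnected subsets is totally disconnected. -/
theorem isTotallyDisconnected_finite_union_of_isCompact
    {X : Type*} [TopologicalSpace X] [T2Space X] {ι : Type*} (s : Finset ι)
    (A : ι → Set X)
    (hcomp : ∀ i ∈ s, IsCompact (A i))
    (htd : ∀ i ∈ s, IsTotallyDisconnected (A i)) :
    IsTotallyDisconnected (⋃ i ∈ s, A i) := by
  classical
  induction s using Finset.induction_on with
  | empty => simpa using isTotallyDisconnected_empty
  | @insert a s ha ih =>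
    rw [Finset.set_biUnion_insert]
    exact isTotallyDisconnected_union_of_isCompact'
      (hcomp a (Finset.mem_insert_self a s))
      (s.isCompact_biUnion fun i hi => hcomp i (Finset.mem_insert_of_mem hi))
      (htd a (Finset.mem_insert_self a s))
      (ih (fun i hi => hcomp i (Finset.mem_insert_of_mem hi))
          (fun i hi => htd i (Finset.mem_insert_of_mem hi)))
end

section
/- Let G be a group, let Z be a normal subgroup of G, and let P be a subgroup of G. Assume that every normal subgroup of G either contains Z or is contained in P. Let T be a subset of G not contained in P, and suppose the image of T in the quotient G/Z normally generates G/Z. Then T normally generates G; that is, the normal closure of T in G is all of G. Moreover, the normal closure of T in G equals the full preimage in G of the normal closure of the image of T in G/Z. -/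
/-- Normal generation criterion: if every normal subgroup of `G` either
contains `Z` or is contained in `P`, and `T ⊆ G` is not contained in `P` and
its image in `G ⧸ Z` normally generates `G ⧸ Z`, then `T` normally generates
`G`; moreover the normal closure of `T` is the full preimage of the normal
closure of its image in `G ⧸ Z`. -/
theorem normal_generation_criterion
    {G : Type*} [Group G] (Z P : Subgroup G) [Z.Normal]
    (hdich : ∀ N : Subgroup G, N.Normal → Z ≤ N ∨ N ≤ P)
    (T : Set G) (hT : ¬ T ⊆ (P : Set G))
    (hgen : Subgroup.normalClosure ((QuotientGroup.mk' Z) '' T) = ⊤) :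
    Subgroup.normalClosure T = ⊤ ∧
    Subgroup.normalClosure T =
      (Subgroup.normalClosure ((QuotientGroup.mk' Z) '' T)).comap
        (QuotientGroup.mk' Z) := by
  have hZN : Z ≤ Subgroup.normalClosure T := by
    rcases hdich _ (Subgroup.normalClosure_normal (s := T)) with h | h
    · exact h
    · exact absurd (fun x hx => h (Subgroup.subset_normalClosure hx)) hT
  have hmap : (Subgroup.normalClosure T).map (QuotientGroup.mk' Z) =
      Subgroup.normalClosure ((QuotientGroup.mk' Z) '' T) :=
    Subgroup.map_normalClosure T _ (QuotientGroup.mk'_surjective Z)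
  have htop : Subgroup.normalClosure T = ⊤ := by
    calc Subgroup.normalClosure T = Subgroup.normalClosure T ⊔ Z :=
          (sup_eq_left.mpr hZN).symm
    _ = ((Subgroup.normalClosure T).map (QuotientGroup.mk' Z)).comap
          (QuotientGroup.mk' Z) := by
        rw [Subgroup.comap_map_eq, QuotientGroup.ker_mk']
    _ = ⊤ := by rw [hmap, hgen]; exact Subgroup.comap_top _
  refine ⟨htop, ?_⟩
  rw [htop, hgen, Subgroup.comap_top]
end
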